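/- arXiv:1709.00853 — 6 statements merged into one kernel-verified Lean document; each statement's English description precedes it below -/
import Mathlib

section
/- Let A(p) = A⁰ + Σ_{k=1}^K p_k·Aᵏ be a parametric interval matrix with affine-linear dependencies, with parameter box p ∈ ∏_k [p̌_k − Δ_k, p̌_k + Δ_k], and suppose the midpoint matrix A(p̌) is nonsingular. Let B = Σ_{k=1}^K Δ_k·|Aᵏ|, where |M| denotes the entrywise absolute value of a matrix. If the spectral radius ρ(|A(p̌)⁻¹|·B) < 1, then A(p) is nonsingular for every p in the parameter box (i.e., the parametric interval matrix is regular). -/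
/-! If `A(p) x = 0` with `x ≠ 0`, write `A(p) = A(p̌) + D` with `|D| ≤ B` entrywise. Then
`x = -A(p̌)⁻¹ D x`, so `|x| ≤ M |x|` for the nonnegative matrix `M = |A(p̌)⁻¹| B`, and iterating,
`|x| ≤ Mᵗ |x|`. By Gelfand's formula `ρ(M) < 1` forces `Mᵗ → 0`, hence `x = 0`. -/

open Matrix

/-- Entrywise absolute value of a real matrix. -/
def mAbs {n : ℕ} (M : Matrix (Fin n) (Fin n) ℝ) : Matrix (Fin n) (Fin n) ℝ :=
  Matrix.of fun i j => |M i j|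

/-- Spectral radius of a real matrix: the largest modulus of a (complex) eigenvalue. -/
noncomputable def specRad {n : ℕ} (M : Matrix (Fin n) (Fin n) ℝ) : ℝ :=
  sSup {r : ℝ | ∃ μ : ℂ, μ ∈ spectrum ℂ (M.map Complex.ofReal) ∧ r = ‖μ‖}

open Filter Topology
open scoped ENNReal

theorem tendsto_pow_atTop_nhds_zero_of_spectralRadius_lt_one {A : Type*} [NormedRing A]
    [NormedAlgebra ℂ A] [CompleteSpace A] {a : A} (h : spectralRadius ℂ a < 1) :
    Tendsto (fun t : ℕ => a ^ t) atTop (𝓝 0) := by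
  obtain ⟨c, hac, hc1⟩ := ENNReal.lt_iff_exists_nnreal_btwn.mp h
  have hroot : ∀ᶠ t : ℕ in atTop, (‖a ^ t‖₊ : ℝ≥0∞) ^ (1 / (t : ℝ)) < c :=
    (spectrum.pow_nnnorm_pow_one_div_tendsto_nhds_spectralRadius a).eventually_lt_const hac
  have hgeom : ∀ᶠ t : ℕ in atTop, ‖a ^ t‖ ≤ (c : ℝ) ^ t := by
    filter_upwards [hroot, eventually_gt_atTop 0] with t ht ht0
    rw [one_div, ENNReal.rpow_inv_lt_iff (by positivity), ENNReal.rpow_natCast] at ht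
    exact_mod_cast ht.le
  refine squeeze_zero_norm' hgeom (tendsto_pow_atTop_nhds_zero_of_lt_one c.2 ?_)
  exact_mod_cast hc1

section MatrixNorm

-- An auxiliary Banach algebra norm; the spectrum does not depend on it.
attribute [local instance] Matrix.linftyOpNormedAddCommGroup Matrix.linftyOpNormedRing
  Matrix.linftyOpNormedAlgebra

theorem spectralRadius_map_ofReal_le_specRad {n : ℕ} (M : Matrix (Fin n) (Fin n) ℝ) :
    spectralRadius ℂ (M.map Complex.ofReal) ≤ ENNReal.ofReal (specRad M) := by
  have hbdd : BddAbove {r : ℝ | ∃ μ : ℂ, μ ∈ spectrum ℂ (M.map Complex.ofReal) ∧ r = ‖μ‖} :=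
    ⟨_, by rintro r ⟨μ, hμ, rfl⟩; exact spectrum.norm_le_norm_mul_of_mem hμ⟩
  refine iSup₂_le fun μ hμ => ?_
  rw [← ENNReal.ofReal_coe_nnreal, coe_nnnorm]
  exact ENNReal.ofReal_le_ofReal (le_csSup hbdd ⟨μ, hμ, rfl⟩)

theorem tendsto_pow_atTop_nhds_zero_of_specRad_lt_one {n : ℕ} {M : Matrix (Fin n) (Fin n) ℝ}
    (h : specRad M < 1) : Tendsto (fun t : ℕ => M ^ t) atTop (𝓝 0) := by
  have hc : Tendsto (fun t : ℕ => (M ^ t).map Complex.ofReal) atTop (𝓝 0) := by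
    simp_rw [show ∀ t : ℕ, (M ^ t).map Complex.ofReal = M.map Complex.ofReal ^ t from
      map_pow Complex.ofRealHom.mapMatrix M]
    exact tendsto_pow_atTop_nhds_zero_of_spectralRadius_lt_one
      ((spectralRadius_map_ofReal_le_specRad M).trans_lt (ENNReal.ofReal_lt_one.mpr h))
  refine (((continuous_id.matrix_map Complex.continuous_re).tendsto 0).comp hc).congr fun t => ?_
  ext i j
  simp

end MatrixNorm

namespace Matrix

variable {ι : Type*} [Fintype ι]

theorem mulVec_monotone_of_nonneg {M : Matrix ι ι ℝ} (hM : ∀ i j, 0 ≤ M i j) :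
    Monotone (M *ᵥ ·) :=
  fun _ _ huv i => dotProduct_le_dotProduct_of_nonneg_left huv (hM i)

theorem mulVec_le_mulVec_of_le {M N : Matrix ι ι ℝ} (hMN : ∀ i j, M i j ≤ N i j) {v : ι → ℝ}
    (hv : 0 ≤ v) : M *ᵥ v ≤ N *ᵥ v :=
  fun i => dotProduct_le_dotProduct_of_nonneg_right (hMN i) hv

theorem le_zero_of_le_mulVec [DecidableEq ι] {M : Matrix ι ι ℝ} (hM : ∀ i j, 0 ≤ M i j)
    (hpow : Tendsto (fun t : ℕ => M ^ t) atTop (𝓝 0)) {y : ι → ℝ} (hy : y ≤ M *ᵥ y) : y ≤ 0 := by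
  have hiter : ∀ t : ℕ, y ≤ M ^ t *ᵥ y := by
    intro t
    induction t with
    | zero => simp
    | succ t ih =>
      calc y ≤ M *ᵥ y := hy
        _ ≤ M *ᵥ (M ^ t *ᵥ y) := mulVec_monotone_of_nonneg hM ih
        _ = M ^ (t + 1) *ᵥ y := by rw [mulVec_mulVec, pow_succ']
  have hlim : Tendsto (fun t : ℕ => M ^ t *ᵥ y) atTop (𝓝 0) := by
    have hcont : Continuous fun N : Matrix ι ι ℝ => N *ᵥ y :=
      continuous_id.matrix_mulVec continuous_const
    simpa [Function.comp_def] using (hcont.tendsto 0).comp hpow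
  exact ge_of_tendsto' hlim hiter

end Matrix

theorem abs_mulVec_le {n : ℕ} (M : Matrix (Fin n) (Fin n) ℝ) (x : Fin n → ℝ) :
    |M *ᵥ x| ≤ mAbs M *ᵥ |x| := fun i => by
  simp only [Pi.abs_apply, mulVec, dotProduct, mAbs, of_apply, ← abs_mul]
  exact Finset.abs_sum_le_sum_abs _ _

theorem mAbs_nonneg {n : ℕ} (M : Matrix (Fin n) (Fin n) ℝ) (i j : Fin n) : 0 ≤ mAbs M i j :=
  abs_nonneg _

theorem abs_le_mulVec_abs_of_mulVec_add_eq_zero {n : ℕ} {A D B : Matrix (Fin n) (Fin n) ℝ}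
    (hA : IsUnit A.det) (hDB : ∀ i j, |D i j| ≤ B i j) {x : Fin n → ℝ}
    (hx : (A + D) *ᵥ x = 0) : |x| ≤ (mAbs A⁻¹ * B) *ᵥ |x| := by
  have hDx : D *ᵥ x = -(A *ᵥ x) := eq_neg_of_add_eq_zero_right (by rwa [add_mulVec] at hx)
  have hx' : A⁻¹ *ᵥ (D *ᵥ x) = -x := by
    rw [hDx, mulVec_neg, mulVec_mulVec, nonsing_inv_mul _ hA, one_mulVec]
  calc |x| = |A⁻¹ *ᵥ (D *ᵥ x)| := by rw [hx', abs_neg]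
    _ ≤ mAbs A⁻¹ *ᵥ |D *ᵥ x| := abs_mulVec_le _ _
    _ ≤ mAbs A⁻¹ *ᵥ (B *ᵥ |x|) :=
      mulVec_monotone_of_nonneg (mAbs_nonneg _)
        ((abs_mulVec_le _ _).trans (mulVec_le_mulVec_of_le hDB (abs_nonneg x)))
    _ = (mAbs A⁻¹ * B) *ᵥ |x| := mulVec_mulVec _ _ _

theorem isUnit_det_add_of_specRad_lt_one {n : ℕ} {A D B : Matrix (Fin n) (Fin n) ℝ}
    (hA : IsUnit A.det) (hDB : ∀ i j, |D i j| ≤ B i j) (hρ : specRad (mAbs A⁻¹ * B) < 1) :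
    IsUnit (A + D).det := by
  rw [isUnit_iff_ne_zero]
  intro hdet
  obtain ⟨x, hx0, hx⟩ := exists_mulVec_eq_zero_iff.mpr hdet
  have hB : ∀ i j, 0 ≤ B i j := fun i j => (abs_nonneg _).trans (hDB i j)
  have hM : ∀ i j, 0 ≤ (mAbs A⁻¹ * B) i j := fun i j => by
    rw [mul_apply]
    exact Finset.sum_nonneg fun l _ => mul_nonneg (mAbs_nonneg _ _ _) (hB l j)
  have habs : |x| ≤ 0 := Matrix.le_zero_of_le_mulVec hM
    (tendsto_pow_atTop_nhds_zero_of_specRad_lt_one hρ)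
    (abs_le_mulVec_abs_of_mulVec_add_eq_zero hA hDB hx)
  exact hx0 (funext fun i => abs_nonpos_iff.mp (habs i))

theorem abs_sum_smul_apply_le {n K : ℕ} (A : Fin K → Matrix (Fin n) (Fin n) ℝ) {c Δ : Fin K → ℝ}
    (hc : ∀ k, |c k| ≤ Δ k) (i j : Fin n) :
    |(∑ k, c k • A k) i j| ≤ (∑ k, Δ k • mAbs (A k)) i j := by
  simp only [Matrix.sum_apply, Matrix.smul_apply, smul_eq_mul]
  refine (Finset.abs_sum_le_sum_abs _ _).trans (Finset.sum_le_sum fun k _ => ?_)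
  rw [abs_mul]
  exact mul_le_mul_of_nonneg_right (hc k) (abs_nonneg _)

theorem stmt_0_general {n K : ℕ}
    (A0 : Matrix (Fin n) (Fin n) ℝ) (A : Fin K → Matrix (Fin n) (Fin n) ℝ)
    (pc Δ : Fin K → ℝ)
    (Amid : Matrix (Fin n) (Fin n) ℝ) (hAmid : Amid = A0 + ∑ k, pc k • A k)
    (B : Matrix (Fin n) (Fin n) ℝ) (hB : B = ∑ k, Δ k • mAbs (A k))
    (hmid : IsUnit Amid.det)
    (hρ : specRad (mAbs Amid⁻¹ * B) < 1) :
    ∀ p : Fin K → ℝ, (∀ k, pc k - Δ k ≤ p k ∧ p k ≤ pc k + Δ k) →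
      IsUnit (A0 + ∑ k, p k • A k).det := by
  intro p hp
  have hsplit : A0 + ∑ k, p k • A k = Amid + ∑ k, (p k - pc k) • A k := by
    simp only [hAmid, sub_smul, Finset.sum_sub_distrib]
    abel
  have hdev : ∀ k, |p k - pc k| ≤ Δ k := fun k =>
    abs_sub_le_iff.mpr ⟨by linarith [hp k], by linarith [hp k]⟩
  rw [hsplit]
  exact isUnit_det_add_of_specRad_lt_one hmid (hB ▸ abs_sum_smul_apply_le A hdev) hρ

/-- If the midpoint matrix `A(p̌)` is nonsingular and `ρ(|A(p̌)⁻¹|·B) < 1` with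
`B = ∑ Δₖ·|Aᵏ|`, then the parametric interval matrix `A(p) = A⁰ + ∑ pₖ·Aᵏ` is regular,
i.e. `A(p)` is nonsingular for every `p` in the parameter box. -/
theorem stmt_0 {n K : ℕ}
    (A0 : Matrix (Fin n) (Fin n) ℝ) (A : Fin K → Matrix (Fin n) (Fin n) ℝ)
    (pc Δ : Fin K → ℝ) (hΔ : ∀ k, 0 ≤ Δ k)
    (Amid : Matrix (Fin n) (Fin n) ℝ) (hAmid : Amid = A0 + ∑ k, pc k • A k)
    (B : Matrix (Fin n) (Fin n) ℝ) (hB : B = ∑ k, Δ k • mAbs (A k))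
    (hmid : IsUnit Amid.det)
    (hρ : specRad (mAbs Amid⁻¹ * B) < 1) :
    ∀ p : Fin K → ℝ, (∀ k, pc k - Δ k ≤ p k ∧ p k ≤ pc k + Δ k) →
      IsUnit (A0 + ∑ k, p k • A k).det :=
  stmt_0_general A0 A pc Δ Amid hAmid B hB hmid hρ
end

section
/- Let A(p) = A⁰ + Σ_{k=1}^K p_k·Aᵏ be a symmetric parametric interval matrix with affine-linear dependencies over the parameter box ∏_k [p̲_k, p̄_k]. Then A(p) is stable for every p in the parameter box if and only if A(p) is stable for every vertex p of the box, i.e., for every p with p_k ∈ {p̲_k, p̄_k} for all k. -/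
/-!
For a symmetric matrix, stability means negative definiteness: `x ⬝ᵥ A(p) x < 0` for all
`x ≠ 0`. For fixed `x` this quadratic form is affine in `p`, namely
`x ⬝ᵥ A⁰ x + ∑ₖ pₖ (x ⬝ᵥ Aᵏ x)`, so over the box it is maximised at the vertex that takes
`p̄ₖ` or `p̲ₖ` according to the sign of `x ⬝ᵥ Aᵏ x`.
-/

open Matrix

theorem Matrix.IsHermitian.forall_spectrum_neg_iff {n : Type*} [Fintype n] [DecidableEq n]
    {M : Matrix n n ℝ} (hM : M.IsHermitian) :
    (∀ μ ∈ spectrum ℝ M, μ < 0) ↔ ∀ x : n → ℝ, x ≠ 0 → x ⬝ᵥ (M *ᵥ x) < 0 := by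
  have hneg : (-M).IsHermitian := hM.neg
  calc (∀ μ ∈ spectrum ℝ M, μ < 0) ↔ ∀ μ ∈ spectrum ℝ (-M), 0 < μ := by
        simp [← spectrum.neg_eq, Set.mem_neg]
    _ ↔ (-M).PosDef := by
        simp [hneg.posDef_iff_eigenvalues_pos, hneg.spectrum_real_eq_range_eigenvalues]
    _ ↔ ∀ x : n → ℝ, x ≠ 0 → x ⬝ᵥ (M *ᵥ x) < 0 := by
        rw [posDef_iff_dotProduct_mulVec, and_iff_right hneg]
        simp [neg_mulVec]

theorem exists_vertex_sum_mul_le {ι : Type*} [Fintype ι] {lo hi p : ι → ℝ}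
    (hp : ∀ k, lo k ≤ p k ∧ p k ≤ hi k) (c : ι → ℝ) :
    ∃ q : ι → ℝ, (∀ k, q k = lo k ∨ q k = hi k) ∧ ∑ k, p k * c k ≤ ∑ k, q k * c k := by
  classical
  refine ⟨fun k => if 0 ≤ c k then hi k else lo k,
    fun k => by by_cases hc : 0 ≤ c k <;> simp [hc], Finset.sum_le_sum fun k _ => ?_⟩
  by_cases hc : 0 ≤ c k
  · simp only [if_pos hc]
    exact mul_le_mul_of_nonneg_right (hp k).2 hc
  · simp only [if_neg hc]
    exact mul_le_mul_of_nonpos_right (hp k).1 (not_le.mp hc).le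

theorem dotProduct_add_sum_smul_mulVec {n ι : Type*} [Fintype n] [Fintype ι]
    (M₀ : Matrix n n ℝ) (M : ι → Matrix n n ℝ) (p : ι → ℝ) (x : n → ℝ) :
    x ⬝ᵥ ((M₀ + ∑ k, p k • M k) *ᵥ x) = x ⬝ᵥ (M₀ *ᵥ x) + ∑ k, p k * (x ⬝ᵥ (M k *ᵥ x)) := by
  simp [add_mulVec, sum_mulVec, dotProduct_add, dotProduct_sum, smul_mulVec]

/-- A symmetric parametric interval matrix `A(p) = A⁰ + ∑ pₖ·Aᵏ` is stable (all eigenvalues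
strictly negative) for every `p` in the parameter box `∏ₖ [p̲ₖ, p̄ₖ]` if and only if it is
stable at every vertex of the box (vertex property). -/
theorem stmt_2 {n K : ℕ}
    (A0 : Matrix (Fin n) (Fin n) ℝ) (A : Fin K → Matrix (Fin n) (Fin n) ℝ)
    (hA0 : A0.IsSymm) (hA : ∀ k, (A k).IsSymm)
    (plo phi : Fin K → ℝ) (hbox : ∀ k, plo k ≤ phi k) :
    (∀ p : Fin K → ℝ, (∀ k, plo k ≤ p k ∧ p k ≤ phi k) →
        ∀ μ ∈ spectrum ℝ (A0 + ∑ k, p k • A k), μ < 0) ↔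
    (∀ p : Fin K → ℝ, (∀ k, p k = plo k ∨ p k = phi k) →
        ∀ μ ∈ spectrum ℝ (A0 + ∑ k, p k • A k), μ < 0) := by
  have hherm (p : Fin K → ℝ) : (A0 + ∑ k, p k • A k).IsHermitian :=
    (isHermitian_iff_isSymm.mpr hA0).add <|
      isSelfAdjoint_sum _ fun k _ => isHermitian_iff_isSymm.mpr ((hA k).smul (p k))
  refine ⟨fun h p hp => h p fun k => ?_, fun h p hp => ?_⟩
  · rcases hp k with hk | hk <;> simp [hk, hbox k]
  rw [(hherm p).forall_spectrum_neg_iff]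
  intro x hx
  obtain ⟨q, hq, hle⟩ := exists_vertex_sum_mul_le hp fun k => x ⬝ᵥ (A k *ᵥ x)
  have hneg := (hherm q).forall_spectrum_neg_iff.mp (h q hq) x hx
  rw [dotProduct_add_sum_smul_mulVec] at hneg ⊢
  linarith
end

section
/- Let A(p) = A⁰ + Σ_{k=1}^K p_k·Aᵏ be a symmetric parametric interval matrix with affine-linear dependencies over the parameter box ∏_k [p̲_k, p̄_k]. Then A(p) is stable for every p in the parameter box if and only if both of the following hold: (i) A(p₀) is stable for some (arbitrary) p₀ in the parameter box, and (ii) A(p) is nonsingular for every p in the parameter box (i.e., the parametric interval matrix is regular). -/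
/-!
For a real symmetric matrix `M` let `λ(M)` be the maximum of `⟪M x, x⟫` on the unit sphere.
It is the largest eigenvalue of `M`, so `M` is stable iff `λ(M) < 0`, and it depends
continuously on `M`, being the supremum over a compact set of a jointly continuous function.
The parameter box is connected, so if `λ(A(p₀)) < 0 ≤ λ(A(p₁))`, the intermediate value
theorem gives a parameter `p` with `λ(A(p)) = 0`, i.e. a singular `A(p)`.
-/

open Metric
open scoped RealInnerProductSpace

namespace Matrix

variable {ι : Type*} [Fintype ι] [DecidableEq ι]

theorem zero_mem_spectrum_iff_det_eq_zero {K : Type*} [Field K] {M : Matrix ι ι K} :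
    (0 : K) ∈ spectrum K M ↔ M.det = 0 := by
  rw [spectrum.zero_mem_iff, isUnit_iff_isUnit_det, isUnit_iff_ne_zero, not_not]

/-- For empty `ι` the sphere is empty and this is the junk value `sSup ∅ = 0`. -/
noncomputable def rayleighMax (M : Matrix ι ι ℝ) : ℝ :=
  sSup ((fun x => ⟪toEuclideanLin M x, x⟫) '' sphere (0 : EuclideanSpace ℝ ι) 1)

theorem bddAbove_inner_image_sphere (M : Matrix ι ι ℝ) :
    BddAbove ((fun x => ⟪toEuclideanLin M x, x⟫) '' sphere (0 : EuclideanSpace ℝ ι) 1) :=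
  (isCompact_sphere _ _).bddAbove_image
    ((toEuclideanLin M).continuous_of_finiteDimensional.inner continuous_id).continuousOn

theorem le_rayleighMax_of_mem_spectrum {M : Matrix ι ι ℝ} {μ : ℝ} (hμ : μ ∈ spectrum ℝ M) :
    μ ≤ rayleighMax M := by
  rw [← spectrum_toLpLin 2, ← Module.End.hasEigenvalue_iff_mem_spectrum] at hμ
  obtain ⟨v, hv⟩ := hμ.exists_hasEigenvector
  have hv0 : ‖v‖ ≠ 0 := norm_ne_zero_iff.2 hv.2
  refine le_csSup_of_le (bddAbove_inner_image_sphere M)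
    ⟨‖v‖⁻¹ • v, by simp [norm_smul, hv0], rfl⟩ (le_of_eq ?_)
  dsimp only
  rw [LinearMap.map_smul, hv.apply_eq_smul, real_inner_smul_left, real_inner_smul_right,
    real_inner_smul_left, real_inner_self_eq_norm_sq]
  field_simp

theorem rayleighMax_eq_iSup (M : Matrix ι ι ℝ) :
    rayleighMax M = ⨆ x : { x : EuclideanSpace ℝ ι // x ≠ 0 },
      RCLike.re ⟪toEuclideanLin M x, x⟫ / ‖(x : EuclideanSpace ℝ ι)‖ ^ 2 := by
  let T := toEuclideanCLM (𝕜 := ℝ) M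
  calc rayleighMax M = sSup (T.rayleighQuotient '' sphere 0 1) := by
        refine congrArg sSup (Set.image_congr fun x hx => ?_)
        simp only [ContinuousLinearMap.rayleighQuotient,
          ContinuousLinearMap.reApplyInnerSelf_apply, mem_sphere_zero_iff_norm.1 hx,
          one_pow, div_one, RCLike.re_to_real]
        rfl
    _ = sSup (T.rayleighQuotient '' {0}ᶜ) := by
        rw [T.image_rayleigh_eq_image_rayleigh_sphere one_pos]
    _ = _ := sSup_image'

theorem IsSymm.rayleighMax_mem_spectrum [Nonempty ι] {M : Matrix ι ι ℝ} (hM : M.IsSymm) :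
    rayleighMax M ∈ spectrum ℝ M := by
  have hT : (toEuclideanLin M).IsSymmetric :=
    isSymmetric_toEuclideanLin_iff.2 (by rwa [IsHermitian, conjTranspose_eq_transpose_of_trivial])
  rw [← spectrum_toLpLin 2, ← Module.End.hasEigenvalue_iff_mem_spectrum, rayleighMax_eq_iSup]
  exact hT.hasEigenvalue_iSup_of_finiteDimensional

theorem continuous_rayleighMax : Continuous (rayleighMax : Matrix ι ι ℝ → ℝ) := by
  have hCLM : Continuous (toEuclideanCLM (n := ι) (𝕜 := ℝ)) :=
    LinearMap.continuous_of_finiteDimensional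
      (toEuclideanCLM (n := ι) (𝕜 := ℝ)).toAlgEquiv.toLinearMap
  have hf : Continuous fun q : Matrix ι ι ℝ × EuclideanSpace ℝ ι =>
      ⟪toEuclideanCLM (𝕜 := ℝ) q.1 q.2, q.2⟫ := by
    fun_prop
  exact (isCompact_sphere _ _).continuous_sSup hf

theorem IsSymm.forall_spectrum_neg_iff_rayleighMax_neg [Nonempty ι] {M : Matrix ι ι ℝ}
    (hM : M.IsSymm) : (∀ μ ∈ spectrum ℝ M, μ < 0) ↔ rayleighMax M < 0 :=
  ⟨fun h => h _ hM.rayleighMax_mem_spectrum,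
    fun h _ hμ => (le_rayleighMax_of_mem_spectrum hμ).trans_lt h⟩

theorem forall_spectrum_neg_of_isPreconnected {X : Type*} [TopologicalSpace X] {S : Set X}
    (hS : IsPreconnected S) {M : X → Matrix ι ι ℝ} (hMc : ContinuousOn M S)
    (hMs : ∀ x ∈ S, (M x).IsSymm) (hdet : ∀ x ∈ S, (M x).det ≠ 0) {a : X} (ha : a ∈ S)
    (hMa : ∀ μ ∈ spectrum ℝ (M a), μ < 0) {x : X} (hx : x ∈ S) :
    ∀ μ ∈ spectrum ℝ (M x), μ < 0 := by
  cases isEmpty_or_nonempty ι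
  · simp [spectrum.of_subsingleton]
  rw [(hMs a ha).forall_spectrum_neg_iff_rayleighMax_neg] at hMa
  rw [(hMs x hx).forall_spectrum_neg_iff_rayleighMax_neg]
  by_contra! hx0
  obtain ⟨y, hy, hy0⟩ := hS.intermediate_value ha hx
    (continuous_rayleighMax.comp_continuousOn hMc) ⟨hMa.le, hx0⟩
  have hsing : (0 : ℝ) ∈ spectrum ℝ (M y) := hy0 ▸ (hMs y hy).rayleighMax_mem_spectrum
  exact hdet y hy (zero_mem_spectrum_iff_det_eq_zero.1 hsing)

end Matrix

open Matrix

/-- A symmetric parametric interval matrix `A(p) = A⁰ + ∑ pₖ·Aᵏ` is stable (all eigenvalues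
strictly negative) for every `p` in the parameter box if and only if (i) `A(p₀)` is stable
for some `p₀` in the box, and (ii) `A(p)` is nonsingular for every `p` in the box. -/
theorem stmt_4 {n K : ℕ}
    (A0 : Matrix (Fin n) (Fin n) ℝ) (A : Fin K → Matrix (Fin n) (Fin n) ℝ)
    (hA0 : A0.IsSymm) (hA : ∀ k, (A k).IsSymm)
    (plo phi : Fin K → ℝ) (hbox : ∀ k, plo k ≤ phi k) :
    (∀ p : Fin K → ℝ, (∀ k, plo k ≤ p k ∧ p k ≤ phi k) →
        ∀ μ ∈ spectrum ℝ (A0 + ∑ k, p k • A k), μ < 0) ↔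
    ((∃ p0 : Fin K → ℝ, (∀ k, plo k ≤ p0 k ∧ p0 k ≤ phi k) ∧
        ∀ μ ∈ spectrum ℝ (A0 + ∑ k, p0 k • A k), μ < 0) ∧
      (∀ p : Fin K → ℝ, (∀ k, plo k ≤ p k ∧ p k ≤ phi k) →
        (A0 + ∑ k, p k • A k).det ≠ 0)) := by
  have hmem (p : Fin K → ℝ) : p ∈ Set.Icc plo phi ↔ ∀ k, plo k ≤ p k ∧ p k ≤ phi k := by
    simp [Pi.le_def, forall_and]
  have hsymm (p : Fin K → ℝ) : (A0 + ∑ k, p k • A k).IsSymm :=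
    hA0.add (by simp only [IsSymm, transpose_sum, transpose_smul, (hA _).eq])
  constructor
  · intro hstable
    have hplo : ∀ k, plo k ≤ plo k ∧ plo k ≤ phi k := fun k => ⟨le_rfl, hbox k⟩
    exact ⟨⟨plo, hplo, hstable plo hplo⟩,
      fun p hp hdet => (hstable p hp 0 (zero_mem_spectrum_iff_det_eq_zero.2 hdet)).false⟩
  · rintro ⟨⟨p0, hp0, hstable0⟩, hreg⟩ p hp
    exact forall_spectrum_neg_of_isPreconnected (convex_Icc plo phi).isPreconnected
      (by fun_prop) (fun q _ => hsymm q) (fun q hq => hreg q ((hmem q).1 hq)) ((hmem p0).2 hp0)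
      hstable0 ((hmem p).2 hp)
end

section
/- Let A(p) = A⁰ + Σ_{k=1}^K p_k·Aᵏ be a symmetric parametric interval matrix with affine-linear dependencies over the parameter box ∏_k [p̌_k − Δ_k, p̌_k + Δ_k] with midpoint p̌ and radius vector Δ. For any p' in the parameter box and any nonzero x ∈ ℝⁿ, setting s_k = sgn(xᵀAᵏx) and p_k = p̌_k + s_k·Δ_k (a vertex of the box), one has xᵀA(p')x ≤ xᵀA(p)x. Consequently, for every p' in the parameter box there exists a vertex p of the box such that the largest eigenvalue satisfies λ_max(A(p')) ≤ λ_max(A(p)). -/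
open Matrix

/-!
The quadratic form `xᵀA(p)x = xᵀA⁰x + ∑ₖ pₖ·xᵀAᵏx` is affine in `p`, so over the box it is
maximised coordinatewise by moving `pₖ` to the end of its interval selected by the sign of the
slope `xᵀAᵏx`. For `λ_max`, take a unit eigenvector `x` of `A(p')` for `λ_max(A(p'))` and the
vertex `q` chosen from `x`; then `λ_max(A(p')) = xᵀA(p')x ≤ xᵀA(q)x ≤ λ_max(A(q))`, the last
step because `λ_max(M)·I - M` is positive semidefinite.
-/

theorem Real.sign_mul_self_eq_abs (r : ℝ) : Real.sign r * r = |r| := by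
  rcases lt_trichotomy r 0 with h | rfl | h
  · rw [Real.sign_of_neg h, abs_of_neg h, neg_one_mul]
  · simp
  · rw [Real.sign_of_pos h, abs_of_pos h, one_mul]

theorem mul_le_mul_add_mul_abs_of_mem_Icc {p c Δ a : ℝ} (hp : p ∈ Set.Icc (c - Δ) (c + Δ)) :
    p * a ≤ c * a + Δ * |a| := by
  have hdist : |p - c| ≤ Δ := abs_sub_le_iff.mpr ⟨by linarith [hp.2], by linarith [hp.1]⟩
  have : (p - c) * a ≤ Δ * |a| :=
    calc (p - c) * a ≤ |p - c| * |a| := by rw [← abs_mul]; exact le_abs_self _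
      _ ≤ Δ * |a| := mul_le_mul_of_nonneg_right hdist (abs_nonneg a)
  linarith

namespace Matrix

variable {m κ : Type*} [Fintype m] [Fintype κ]

theorem dotProduct_mulVec_add_sum_smul (A0 : Matrix m m ℝ) (A : κ → Matrix m m ℝ)
    (p : κ → ℝ) (x : m → ℝ) :
    x ⬝ᵥ (A0 + ∑ k, p k • A k) *ᵥ x = x ⬝ᵥ A0 *ᵥ x + ∑ k, p k * (x ⬝ᵥ A k *ᵥ x) := by
  simp only [add_mulVec, sum_mulVec, smul_mulVec, dotProduct_add, dotProduct_sum,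
    dotProduct_smul, smul_eq_mul]

omit [Fintype m] in
theorem IsSymm.add_sum_smul {A0 : Matrix m m ℝ} {A : κ → Matrix m m ℝ} (hA0 : A0.IsSymm)
    (hA : ∀ k, (A k).IsSymm) (p : κ → ℝ) : (A0 + ∑ k, p k • A k).IsSymm :=
  hA0.add <| by
    simp only [IsSymm, transpose_sum]
    exact Finset.sum_congr rfl fun k _ => (hA k).smul (p k)

theorem dotProduct_mulVec_le_of_mem_box (A0 : Matrix m m ℝ) (A : κ → Matrix m m ℝ)
    {pc Δ p q : κ → ℝ} (hp : ∀ k, pc k - Δ k ≤ p k ∧ p k ≤ pc k + Δ k) (x : m → ℝ)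
    (hq : ∀ k, q k * (x ⬝ᵥ A k *ᵥ x) = pc k * (x ⬝ᵥ A k *ᵥ x) + Δ k * |x ⬝ᵥ A k *ᵥ x|) :
    x ⬝ᵥ (A0 + ∑ k, p k • A k) *ᵥ x ≤ x ⬝ᵥ (A0 + ∑ k, q k • A k) *ᵥ x := by
  rw [dotProduct_mulVec_add_sum_smul, dotProduct_mulVec_add_sum_smul]
  refine add_le_add_right (Finset.sum_le_sum fun k _ => ?_) _
  rw [hq k]
  exact mul_le_mul_add_mul_abs_of_mem_Icc (hp k)

/-- Unlike `pc + Real.sign _ * Δ`, which is the midpoint when the slope vanishes, this is always a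
vertex. -/
theorem exists_vertex_dotProduct_mulVec_le (A0 : Matrix m m ℝ) (A : κ → Matrix m m ℝ)
    {pc Δ p : κ → ℝ} (hp : ∀ k, pc k - Δ k ≤ p k ∧ p k ≤ pc k + Δ k) (x : m → ℝ) :
    ∃ q : κ → ℝ, (∀ k, q k = pc k - Δ k ∨ q k = pc k + Δ k) ∧
      x ⬝ᵥ (A0 + ∑ k, p k • A k) *ᵥ x ≤ x ⬝ᵥ (A0 + ∑ k, q k • A k) *ᵥ x := by
  classical
  refine ⟨fun k => if 0 ≤ x ⬝ᵥ A k *ᵥ x then pc k + Δ k else pc k - Δ k,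
    fun k => by dsimp only; split_ifs <;> simp,
    dotProduct_mulVec_le_of_mem_box A0 A hp x fun k => ?_⟩
  split_ifs with h
  · rw [abs_of_nonneg h]; ring
  · rw [abs_of_neg (not_le.mp h)]; ring

theorem IsHermitian.dotProduct_mulVec_le_sSup_spectrum [DecidableEq m] {M : Matrix m m ℝ}
    (hM : M.IsHermitian) (x : m → ℝ) : x ⬝ᵥ M *ᵥ x ≤ sSup (spectrum ℝ M) * (x ⬝ᵥ x) := by
  set L := sSup (spectrum ℝ M)
  have hpsd : (algebraMap ℝ (Matrix m m ℝ) L - M).PosSemidef := by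
    refine posSemidef_iff_isHermitian_and_spectrum_nonneg.mpr ⟨?_, ?_⟩
    · rw [algebraMap_eq_diagonal]
      exact (isHermitian_diagonal _).sub hM
    · rw [← spectrum.singleton_sub_eq]
      rintro _ ⟨_, rfl, μ, hμ, rfl⟩
      exact sub_nonneg.mpr (le_csSup M.finite_real_spectrum.bddAbove hμ)
  simpa only [star_trivial, Algebra.algebraMap_eq_smul_one, sub_mulVec, smul_mulVec, one_mulVec,
    dotProduct_sub, dotProduct_smul, smul_eq_mul, sub_nonneg] using hpsd.dotProduct_mulVec_nonneg x

theorem IsHermitian.exists_dotProduct_mulVec_eq_sSup_spectrum [DecidableEq m] [Nonempty m]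
    {M : Matrix m m ℝ} (hM : M.IsHermitian) :
    ∃ x : m → ℝ, x ⬝ᵥ x = 1 ∧ x ⬝ᵥ M *ᵥ x = sSup (spectrum ℝ M) := by
  have hmem : sSup (spectrum ℝ M) ∈ Set.range hM.eigenvalues := by
    rw [← hM.spectrum_real_eq_range_eigenvalues]
    refine Set.Nonempty.csSup_mem ?_ M.finite_real_spectrum
    rw [hM.spectrum_real_eq_range_eigenvalues]
    exact Set.range_nonempty _
  obtain ⟨i, hi⟩ := hmem
  set v := hM.eigenvectorBasis i
  have hv : v ⬝ᵥ v = 1 := by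
    have hnorm : ‖v‖ = 1 := hM.eigenvectorBasis.orthonormal.1 i
    have hinner := EuclideanSpace.inner_eq_star_dotProduct v v
    rw [real_inner_self_eq_norm_sq, star_trivial] at hinner
    rw [← hinner, hnorm, one_pow]
  refine ⟨v, hv, ?_⟩
  rw [hM.mulVec_eigenvectorBasis i, dotProduct_smul, hv, smul_eq_mul, mul_one, hi]

end Matrix

theorem stmt_7_general {n K : ℕ}
    (A0 : Matrix (Fin n) (Fin n) ℝ) (A : Fin K → Matrix (Fin n) (Fin n) ℝ)
    (hA0 : A0.IsSymm) (hA : ∀ k, (A k).IsSymm)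
    (pc Δ : Fin K → ℝ) :
    (∀ p' : Fin K → ℝ, (∀ k, pc k - Δ k ≤ p' k ∧ p' k ≤ pc k + Δ k) →
      ∀ x : Fin n → ℝ, x ≠ 0 →
        x ⬝ᵥ (A0 + ∑ k, p' k • A k).mulVec x ≤
          x ⬝ᵥ (A0 + ∑ k,
            (pc k + Real.sign (x ⬝ᵥ (A k).mulVec x) * Δ k) • A k).mulVec x) ∧
    (∀ p' : Fin K → ℝ, (∀ k, pc k - Δ k ≤ p' k ∧ p' k ≤ pc k + Δ k) →
      ∃ p : Fin K → ℝ, (∀ k, p k = pc k - Δ k ∨ p k = pc k + Δ k) ∧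
        sSup (spectrum ℝ (A0 + ∑ k, p' k • A k)) ≤
          sSup (spectrum ℝ (A0 + ∑ k, p k • A k))) := by
  refine ⟨fun p' hp' x _ => dotProduct_mulVec_le_of_mem_box A0 A hp' x fun k => ?_,
    fun p' hp' => ?_⟩
  · rw [add_mul, mul_right_comm, Real.sign_mul_self_eq_abs, mul_comm |_|]
  have hherm : ∀ p : Fin K → ℝ, (A0 + ∑ k, p k • A k).IsHermitian := fun p =>
    isHermitian_iff_isSymm.mpr (hA0.add_sum_smul hA p)
  cases isEmpty_or_nonempty (Fin n)
  · obtain ⟨q, hq, -⟩ := exists_vertex_dotProduct_mulVec_le A0 A hp' 0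
    exact ⟨q, hq, (congrArg (fun M => sSup (spectrum ℝ M)) (Subsingleton.elim _ _)).le⟩
  obtain ⟨x, hx, hmax⟩ := (hherm p').exists_dotProduct_mulVec_eq_sSup_spectrum
  obtain ⟨q, hq, hle⟩ := exists_vertex_dotProduct_mulVec_le A0 A hp' x
  refine ⟨q, hq, ?_⟩
  calc sSup (spectrum ℝ (A0 + ∑ k, p' k • A k)) = x ⬝ᵥ (A0 + ∑ k, p' k • A k) *ᵥ x := hmax.symm
    _ ≤ x ⬝ᵥ (A0 + ∑ k, q k • A k) *ᵥ x := hle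
    _ ≤ sSup (spectrum ℝ (A0 + ∑ k, q k • A k)) := by
      simpa only [hx, mul_one] using (hherm q).dotProduct_mulVec_le_sSup_spectrum x

/-- For a symmetric parametric interval matrix `A(p) = A⁰ + ∑ pₖ·Aᵏ` over the box
`∏ₖ [p̌ₖ − Δₖ, p̌ₖ + Δₖ]`: for any `p'` in the box and any nonzero `x`, with
`sₖ = sgn(xᵀAᵏx)` and `pₖ = p̌ₖ + sₖ·Δₖ` one has `xᵀA(p')x ≤ xᵀA(p)x`; consequently,
for every `p'` in the box there is a vertex `p` of the box with
`λ_max(A(p')) ≤ λ_max(A(p))`, where `λ_max` is the largest eigenvalue. -/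
theorem stmt_7 {n K : ℕ}
    (A0 : Matrix (Fin n) (Fin n) ℝ) (A : Fin K → Matrix (Fin n) (Fin n) ℝ)
    (hA0 : A0.IsSymm) (hA : ∀ k, (A k).IsSymm)
    (pc Δ : Fin K → ℝ) (hΔ : ∀ k, 0 ≤ Δ k) :
    (∀ p' : Fin K → ℝ, (∀ k, pc k - Δ k ≤ p' k ∧ p' k ≤ pc k + Δ k) →
      ∀ x : Fin n → ℝ, x ≠ 0 →
        x ⬝ᵥ (A0 + ∑ k, p' k • A k).mulVec x ≤
          x ⬝ᵥ (A0 + ∑ k,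
            (pc k + Real.sign (x ⬝ᵥ (A k).mulVec x) * Δ k) • A k).mulVec x) ∧
    (∀ p' : Fin K → ℝ, (∀ k, pc k - Δ k ≤ p' k ∧ p' k ≤ pc k + Δ k) →
      ∃ p : Fin K → ℝ, (∀ k, p k = pc k - Δ k ∨ p k = pc k + Δ k) ∧
        sSup (spectrum ℝ (A0 + ∑ k, p' k • A k)) ≤
          sSup (spectrum ℝ (A0 + ∑ k, p k • A k))) :=
  stmt_7_general A0 A hA0 hA pc Δ
end

section
/- Let A(p) = A⁰ + Σ_{k=1}^K p_k·Aᵏ be a symmetric parametric interval matrix with affine-linear dependencies over the parameter box ∏_k [p̌_k − Δ_k, p̌_k + Δ_k] with midpoint p̌ and radius vector Δ. For every p' in the parameter box there exists a vertex p of the box (with p_k ∈ {p̌_k − Δ_k, p̌_k + Δ_k} for all k) such that the smallest eigenvalue satisfies λ_min(A(p')) ≥ λ_min(A(p)). -/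
/-!
The smallest eigenvalue of a Hermitian matrix `M` is the largest `c` with `c • 1 ≤ M` in the
Loewner order, so it is a concave function of `M`; composed with the affine map `p ↦ A(p)` it
is concave on parameter space. The box is the convex hull of its vertices, and a concave function
attains its minimum over a convex hull at one of the generating points.
-/

open Matrix

open scoped MatrixOrder

theorem Set.Icc_subset_convexHull_pi_pair {ι 𝕜 : Type*} [Finite ι] [Field 𝕜] [LinearOrder 𝕜]
    [IsStrictOrderedRing 𝕜] (a b : ι → 𝕜) :
    Set.Icc a b ⊆ convexHull 𝕜 (Set.univ.pi fun k => {a k, b k}) := by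
  rw [convexHull_pi, ← Set.pi_univ_Icc]
  refine Set.pi_mono fun k _ => ?_
  rw [convexHull_pair]
  exact Icc_subset_segment

namespace Matrix

variable {n 𝕜 : Type*} [RCLike 𝕜]

theorem convex_setOf_isHermitian : Convex ℝ {M : Matrix n n 𝕜 | M.IsHermitian} :=
  (selfAdjoint.submodule ℝ (Matrix n n 𝕜)).convex

variable [Fintype n] [DecidableEq n]

theorem IsHermitian.algebraMap_sInf_spectrum_le {M : Matrix n n 𝕜} (hM : M.IsHermitian) :
    algebraMap ℝ _ (sInf (spectrum ℝ M)) ≤ M :=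
  (algebraMap_le_iff_le_spectrum hM).2 fun _ hx => csInf_le M.finite_real_spectrum.bddBelow hx

theorem concaveOn_sInf_spectrum :
    ConcaveOn ℝ {M : Matrix n n 𝕜 | M.IsHermitian} (fun M => sInf (spectrum ℝ M)) := by
  refine ⟨convex_setOf_isHermitian,
    fun B (hB : B.IsHermitian) C (hC : C.IsHermitian) a b ha hb hab => ?_⟩
  have hBC : (a • B + b • C).IsHermitian := convex_setOf_isHermitian hB hC ha hb hab
  cases isEmpty_or_nonempty n
  -- for empty `n` every spectrum is empty, and `sInf ∅ = 0`
  · simp [spectrum.of_subsingleton]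
  have hle : algebraMap ℝ _ (a • sInf (spectrum ℝ B) + b • sInf (spectrum ℝ C)) ≤
      a • B + b • C := by
    rw [← Algebra.linearMap_apply, map_add, map_smul, map_smul]
    exact add_le_add (smul_le_smul_of_nonneg_left hB.algebraMap_sInf_spectrum_le ha)
      (smul_le_smul_of_nonneg_left hC.algebraMap_sInf_spectrum_le hb)
  exact le_csInf (ContinuousFunctionalCalculus.spectrum_nonempty _ hBC)
    ((algebraMap_le_iff_le_spectrum hBC).1 hle)

theorem concaveOn_sInf_spectrum_add_sum_smul {ι : Type*} [Fintype ι] {A₀ : Matrix n n 𝕜}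
    {A : ι → Matrix n n 𝕜} (hA₀ : A₀.IsHermitian) (hA : ∀ k, (A k).IsHermitian) :
    ConcaveOn ℝ Set.univ fun p : ι → ℝ => sInf (spectrum ℝ (A₀ + ∑ k, p k • A k)) := by
  let g : (ι → ℝ) →ᵃ[ℝ] Matrix n n 𝕜 :=
    AffineMap.const ℝ _ A₀ + (Fintype.linearCombination ℝ A).toAffineMap
  have hg : ∀ p, (g p).IsHermitian := fun p =>
    hA₀.isSelfAdjoint.add <| isSelfAdjoint_sum _ fun k _ =>
      (IsSelfAdjoint.all (p k)).smul (hA k).isSelfAdjoint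
  exact (concaveOn_sInf_spectrum.comp_affineMap g).subset (fun p _ => hg p) convex_univ

end Matrix

theorem stmt_8_general {n K : ℕ}
    (A0 : Matrix (Fin n) (Fin n) ℝ) (A : Fin K → Matrix (Fin n) (Fin n) ℝ)
    (hA0 : A0.IsSymm) (hA : ∀ k, (A k).IsSymm)
    (pc Δ : Fin K → ℝ) :
    ∀ p' : Fin K → ℝ, (∀ k, pc k - Δ k ≤ p' k ∧ p' k ≤ pc k + Δ k) →
      ∃ p : Fin K → ℝ, (∀ k, p k = pc k - Δ k ∨ p k = pc k + Δ k) ∧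
        sInf (spectrum ℝ (A0 + ∑ k, p k • A k)) ≤
          sInf (spectrum ℝ (A0 + ∑ k, p' k • A k)) := by
  intro p' hp'
  have hconc := concaveOn_sInf_spectrum_add_sum_smul (isHermitian_iff_isSymm.2 hA0)
    fun k => isHermitian_iff_isSymm.2 (hA k)
  have hbox : p' ∈ Set.Icc (pc - Δ) (pc + Δ) := ⟨fun k => (hp' k).1, fun k => (hp' k).2⟩
  obtain ⟨p, hp, hle⟩ := hconc.exists_le_of_mem_convexHull (Set.subset_univ _)
    (Set.Icc_subset_convexHull_pi_pair _ _ hbox)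
  exact ⟨p, fun k => hp k trivial, hle⟩

/-- For a symmetric parametric interval matrix `A(p) = A⁰ + ∑ pₖ·Aᵏ` over the box
`∏ₖ [p̌ₖ − Δₖ, p̌ₖ + Δₖ]`, for every `p'` in the box there exists a vertex `p` of the box
such that `λ_min(A(p')) ≥ λ_min(A(p))`, where `λ_min` is the smallest eigenvalue. -/
theorem stmt_8 {n K : ℕ}
    (A0 : Matrix (Fin n) (Fin n) ℝ) (A : Fin K → Matrix (Fin n) (Fin n) ℝ)
    (hA0 : A0.IsSymm) (hA : ∀ k, (A k).IsSymm)
    (pc Δ : Fin K → ℝ) (hΔ : ∀ k, 0 ≤ Δ k) :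
    ∀ p' : Fin K → ℝ, (∀ k, pc k - Δ k ≤ p' k ∧ p' k ≤ pc k + Δ k) →
      ∃ p : Fin K → ℝ, (∀ k, p k = pc k - Δ k ∨ p k = pc k + Δ k) ∧
        sInf (spectrum ℝ (A0 + ∑ k, p k • A k)) ≤
          sInf (spectrum ℝ (A0 + ∑ k, p' k • A k)) :=
  stmt_8_general A0 A hA0 hA pc Δ
end

section
/- Let A(p) = A⁰ + Σ_{k=1}^K p_k·Aᵏ be a symmetric parametric interval matrix with affine-linear dependencies over the parameter box ∏_k [p̌_k − Δ_k, p̌_k + Δ_k] with midpoint p̌ and radius vector Δ, and suppose the midpoint matrix A(p̌) is stable. Define the radius of stability s = inf{ r ≥ 0 : there exists p ∈ ∏_k [p̌_k − r·Δ_k, p̌_k + r·Δ_k] such that A(p) is not stable } and the radius of regularity r₀ = inf{ r ≥ 0 : there exists p ∈ ∏_k [p̌_k − r·Δ_k, p̌_k + r·Δ_k] such that A(p) is singular }. Then s = r₀. -/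
/-!
Stability of a symmetric matrix `M` means that `-M` is positive definite, and a singular matrix
is never stable, so it suffices to find a singular `A(p')` in every box that contains an unstable
`A(p)`. Take `p'` on the segment from `p̌` to `p`, which lies in the box by convexity: along it,
the minimum of the quadratic form of `-A` over the unit sphere is continuous, positive at `p̌` and
nonpositive at `p`. Where it vanishes, `-A` is positive semidefinite with an isotropic unit vector,
which therefore lies in its kernel. Hence the two sets of radii coincide, not only their infima.
-/

open Matrix Metric Set AffineMap

lemma exists_mem_sphere_eq_norm_smul {E : Type*} [NormedAddCommGroup E] [NormedSpace ℝ E]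
    {x : E} (hx : x ≠ 0) : ∃ u ∈ sphere (0 : E) 1, x = ‖x‖ • u := by
  have hx' : ‖x‖ ≠ 0 := norm_ne_zero_iff.mpr hx
  refine ⟨‖x‖⁻¹ • x, ?_, by rw [smul_inv_smul₀ hx']⟩
  rw [mem_sphere_zero_iff_norm, norm_smul, norm_inv, norm_norm, inv_mul_cancel₀ hx']

lemma add_sum_lineMap_smul {R ι M : Type*} [CommRing R] [Fintype ι] [AddCommGroup M] [Module R M]
    (a : M) (v : ι → M) (x y : ι → R) (t : R) :
    a + ∑ k, lineMap x y t k • v k = lineMap (a + ∑ k, x k • v k) (a + ∑ k, y k • v k) t := by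
  simp only [lineMap_apply_module, Pi.add_apply, Pi.smul_apply, smul_eq_mul, add_smul, mul_smul,
    Finset.sum_add_distrib, ← Finset.smul_sum]
  module

namespace Matrix

variable {ι : Type*}

lemma IsHermitian.lineMap {P Q : Matrix ι ι ℝ} (hP : P.IsHermitian) (hQ : Q.IsHermitian)
    (t : ℝ) : (lineMap P Q t).IsHermitian := by
  rw [lineMap_apply_module]
  exact (hP.smul (IsSelfAdjoint.all _)).add (hQ.smul (IsSelfAdjoint.all _))

variable [Fintype ι]

lemma smul_dotProduct_mulVec_smul (R : Matrix ι ι ℝ) (c : ℝ) (u : ι → ℝ) :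
    (c • u) ⬝ᵥ R *ᵥ (c • u) = c ^ 2 * (u ⬝ᵥ R *ᵥ u) := by
  rw [smul_dotProduct, mulVec_smul, dotProduct_smul, smul_eq_mul, smul_eq_mul, sq, mul_assoc]

lemma IsHermitian.posDef_iff_forall_mem_sphere {R : Matrix ι ι ℝ} (hR : R.IsHermitian) :
    R.PosDef ↔ ∀ u ∈ sphere (0 : ι → ℝ) 1, 0 < u ⬝ᵥ R *ᵥ u := by
  refine ⟨fun h u hu => h.dotProduct_mulVec_pos (ne_zero_of_mem_unit_sphere ⟨u, hu⟩),
    fun h => .of_dotProduct_mulVec_pos hR fun x hx => ?_⟩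
  obtain ⟨u, hu, hxu⟩ := exists_mem_sphere_eq_norm_smul hx
  rw [star_trivial, hxu, smul_dotProduct_mulVec_smul]
  exact mul_pos (pow_pos (norm_pos_iff.mpr hx) 2) (h u hu)

lemma IsHermitian.posSemidef_iff_forall_mem_sphere {R : Matrix ι ι ℝ} (hR : R.IsHermitian) :
    R.PosSemidef ↔ ∀ u ∈ sphere (0 : ι → ℝ) 1, 0 ≤ u ⬝ᵥ R *ᵥ u := by
  refine ⟨fun h u _ => h.dotProduct_mulVec_nonneg u,
    fun h => .of_dotProduct_mulVec_nonneg hR fun x => ?_⟩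
  rcases eq_or_ne x 0 with rfl | hx
  · simp
  obtain ⟨u, hu, hxu⟩ := exists_mem_sphere_eq_norm_smul hx
  rw [star_trivial, hxu, smul_dotProduct_mulVec_smul]
  exact mul_nonneg (sq_nonneg _) (h u hu)

variable [DecidableEq ι]

open scoped MatrixOrder in
lemma IsHermitian.forall_mem_spectrum_neg_iff_posDef_neg {M : Matrix ι ι ℝ}
    (hM : M.IsHermitian) : (∀ μ ∈ spectrum ℝ M, μ < 0) ↔ (-M).PosDef := by
  rw [← isStrictlyPositive_iff_posDef,
    StarOrderedRing.isStrictlyPositive_iff_spectrum_pos (R := ℝ) _ hM.neg.isSelfAdjoint,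
    ← spectrum.neg_eq]
  simp

theorem exists_det_lineMap_eq_zero {P Q : Matrix ι ι ℝ} (hP : P.PosDef) (hQ : Q.IsHermitian)
    (hQ' : ¬ Q.PosDef) : ∃ t ∈ Icc (0 : ℝ) 1, (lineMap P Q t).det = 0 := by
  set S := sphere (0 : ι → ℝ) 1
  have hS : IsCompact S := isCompact_sphere 0 1
  set q : ℝ → (ι → ℝ) → ℝ := fun t u => u ⬝ᵥ lineMap P Q t *ᵥ u
  have hq : Continuous ↿q := by fun_prop
  have hqt (t : ℝ) : Continuous (q t) := hq.comp (.prodMk_right t)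
  obtain ⟨u₁, hu₁, hQu₁⟩ : ∃ u ∈ S, q 1 u ≤ 0 := by
    have := mt hQ.posDef_iff_forall_mem_sphere.mpr hQ'
    push Not at this
    simpa only [q, lineMap_apply_one] using this
  have hSne : S.Nonempty := ⟨u₁, hu₁⟩
  set m : ℝ → ℝ := fun t => sInf (q t '' S)
  have hm_mem (t : ℝ) : m t ∈ q t '' S :=
    (hS.image (hqt t)).sInf_mem (hSne.image _)
  have hm_le (t : ℝ) {u} (hu : u ∈ S) : m t ≤ q t u :=
    csInf_le (hS.image (hqt t)).bddBelow (mem_image_of_mem _ hu)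
  have hm0 : 0 < m 0 := by
    obtain ⟨u, hu, hmu⟩ := hm_mem 0
    rw [← hmu]
    simpa only [q, lineMap_apply_zero] using hP.1.posDef_iff_forall_mem_sphere.mp hP u hu
  obtain ⟨t, ht, hmt⟩ : ∃ t ∈ Icc (0 : ℝ) 1, m t = 0 :=
    intermediate_value_Icc' zero_le_one (hS.continuous_sInf hq).continuousOn
      ⟨(hm_le 1 hu₁).trans hQu₁, hm0.le⟩
  have hpsd : (lineMap P Q t).PosSemidef :=
    (hP.1.lineMap hQ t).posSemidef_iff_forall_mem_sphere.mpr fun u hu => hmt ▸ hm_le t hu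
  obtain ⟨u, hu, hqu⟩ := hm_mem t
  refine ⟨t, ht, exists_mulVec_eq_zero_iff.mp ⟨u, ne_zero_of_mem_unit_sphere ⟨u, hu⟩, ?_⟩⟩
  rw [← hpsd.dotProduct_mulVec_zero_iff, star_trivial]
  exact hqu.trans hmt

end Matrix

/-- For a symmetric parametric interval matrix `A(p) = A⁰ + ∑ pₖ·Aᵏ` whose midpoint matrix
`A(p̌)` is stable (all eigenvalues strictly negative), the radius of stability (the smallest
`r ≥ 0` for which the `r`-scaled box `∏ₖ [p̌ₖ − r·Δₖ, p̌ₖ + r·Δₖ]` contains a parameter `p`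
with `A(p)` unstable) equals the radius of regularity (the smallest `r ≥ 0` for which the
`r`-scaled box contains a parameter `p` with `A(p)` singular). -/
theorem stmt_11 {n K : ℕ}
    (A0 : Matrix (Fin n) (Fin n) ℝ) (A : Fin K → Matrix (Fin n) (Fin n) ℝ)
    (hA0 : A0.IsSymm) (hA : ∀ k, (A k).IsSymm)
    (pc Δ : Fin K → ℝ) (hΔ : ∀ k, 0 ≤ Δ k)
    (hmid : ∀ μ ∈ spectrum ℝ (A0 + ∑ k, pc k • A k), μ < 0) :
    sInf {r : ℝ | 0 ≤ r ∧ ∃ p : Fin K → ℝ,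
        (∀ k, pc k - r * Δ k ≤ p k ∧ p k ≤ pc k + r * Δ k) ∧
        ¬ (∀ μ ∈ spectrum ℝ (A0 + ∑ k, p k • A k), μ < 0)} =
    sInf {r : ℝ | 0 ≤ r ∧ ∃ p : Fin K → ℝ,
        (∀ k, pc k - r * Δ k ≤ p k ∧ p k ≤ pc k + r * Δ k) ∧
        (A0 + ∑ k, p k • A k).det = 0} := by
  have hherm (p : Fin K → ℝ) : (A0 + ∑ k, p k • A k).IsHermitian :=
    isHermitian_iff_isSymm.mpr <| hA0.add <|
      Finset.sum_induction _ IsSymm (fun _ _ => IsSymm.add) isSymm_zero fun k _ => (hA k).smul _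
  congr 1
  ext r
  refine and_congr_right fun hr => ⟨?_, ?_⟩
  · rintro ⟨p, hp, hunstable⟩
    obtain ⟨t, ht, hdet⟩ := exists_det_lineMap_eq_zero
      ((hherm pc).forall_mem_spectrum_neg_iff_posDef_neg.mp hmid) (hherm p).neg
      (mt (hherm p).forall_mem_spectrum_neg_iff_posDef_neg.mpr hunstable)
    refine ⟨lineMap pc p t, fun k => ?_, ?_⟩
    · have hpc : pc k ∈ Icc (pc k - r * Δ k) (pc k + r * Δ k) := by
        have := mul_nonneg hr (hΔ k)
        constructor <;> linarith
      rw [pi_lineMap_apply]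
      exact (convex_Icc _ _).lineMap_mem hpc (hp k) ht
    · have hneg : lineMap (-(A0 + ∑ k, pc k • A k)) (-(A0 + ∑ k, p k • A k)) t =
          -lineMap (A0 + ∑ k, pc k • A k) (A0 + ∑ k, p k • A k) t := by
        rw [lineMap_apply_module, lineMap_apply_module]
        module
      rw [hneg, det_neg, mul_eq_zero] at hdet
      rw [add_sum_lineMap_smul]
      exact hdet.resolve_left (pow_ne_zero _ (neg_ne_zero.mpr one_ne_zero))
  · rintro ⟨p, hp, hdet⟩
    refine ⟨p, hp, fun h => (h 0 ?_).false⟩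
    rw [spectrum.zero_mem_iff, isUnit_iff_isUnit_det, hdet]
    exact not_isUnit_zero
end
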